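/- arXiv:1301.2171 — 3 statements merged into one kernel-verified Lean document; each statement's English description precedes it below -/
import Mathlib

section
/- Let Ω be a countably infinite set and let u, f ∈ Ω^Ω. If 0 < c(u) < ∞, 0 < c(f) < ∞, and d(u) = d(f), then f belongs to the subsemigroup of Ω^Ω generated by S_{1,2,3,4,5} ∪ {u}. -/
/-!
Setting: `Ω` is a countably infinite set, `Function.End Ω = Ω → Ω` is the full
transformation semigroup (a subset is closed under composition in one order iff
it is closed in the other, so the lattice of subsemigroups is unaffected by the
left-to-right convention of the paper).
-/

open Cardinal

/-- A transversal of `f`: a set on which `f` is injective and whose image is all of `Ωf`. -/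
def IsTransversal {Ω : Type*} (f : Ω → Ω) (T : Set Ω) : Prop :=
  Set.InjOn f T ∧ f '' T = Set.range f

/-- The defect `d(f) = |Ω \ Ωf|`. -/
noncomputable def defect {Ω : Type*} (f : Ω → Ω) : Cardinal :=
  #((Set.range f)ᶜ : Set Ω)

/-- The collapse `c(f) = |Ω \ Σ|` for a transversal `Σ` of `f` (the value is
independent of the choice of transversal, so the infimum is the common value). -/
noncomputable def collapse {Ω : Type*} (f : Ω → Ω) : Cardinal :=
  ⨅ T : {T : Set Ω // IsTransversal f T}, #(T.1ᶜ : Set Ω)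

/-- The infinite contraction index `k(f) = |{α : αf⁻¹ infinite}|`. -/
noncomputable def contract {Ω : Type*} (f : Ω → Ω) : Cardinal :=
  #({α : Ω | (f ⁻¹' {α}).Infinite} : Set Ω)

def S1 {Ω : Type*} : Set (Function.End Ω) := {f | collapse f = 0 ∨ 0 < defect f}
def S2 {Ω : Type*} : Set (Function.End Ω) := {f | 0 < collapse f ∨ defect f = 0}
def S3 {Ω : Type*} : Set (Function.End Ω) := {f | collapse f < ℵ₀ ∨ ℵ₀ ≤ defect f}
def S4 {Ω : Type*} : Set (Function.End Ω) := {f | ℵ₀ ≤ collapse f ∨ defect f < ℵ₀}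
def S5 {Ω : Type*} : Set (Function.End Ω) := {f | contract f < ℵ₀}

/-- `Sym(Ω)`, the bijections of `Ω`. -/
def SymOmega {Ω : Type*} : Set (Function.End Ω) := {f | Function.Bijective f}

/-- `U = {f : d(f) = ∞ or 0 < c(f) < ∞} ∪ Sym(Ω)`. -/
def SetU {Ω : Type*} : Set (Function.End Ω) :=
  {f | ℵ₀ ≤ defect f ∨ (0 < collapse f ∧ collapse f < ℵ₀)} ∪ SymOmega

/-- `V = {f : c(f) = ∞ or 0 < d(f) < ∞} ∪ Sym(Ω)`. -/
def SetV {Ω : Type*} : Set (Function.End Ω) :=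
  {f | ℵ₀ ≤ collapse f ∨ (0 < defect f ∧ defect f < ℵ₀)} ∪ SymOmega

/-- `S_{1,2,3,4,5}`. -/
def S12345 {Ω : Type*} : Set (Function.End Ω) := S1 ∩ S2 ∩ S3 ∩ S4 ∩ S5

/-- The family `S_1, …, S_5` indexed by `Fin 5`. -/
def SS {Ω : Type*} : Fin 5 → Set (Function.End Ω) := ![S1, S2, S3, S4, S5]

/-!
Factor `f = σ * u * b`. Fix a transversal `Σ` of `u` with `|Ω \ Σ| = c(u)`, and let `b` have the
kernel of `f` and image `Σ` (possible because `Ωf` and `Σ` are both countably infinite). Then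
`b` has `c(b) = c(f)` and `d(b) = c(u)`, both finite and positive, so `b ∈ S_{1,2,3,4,5}`. The map
`u ∘ b` has the kernel of `f` and image `Ωu`, whose complement has the size `d(u) = d(f)` of the
complement of `Ωf`; so a bijection `σ` carries `u ∘ b` to `f`.
-/

section Transversal

variable {α : Type*} {g h : α → α}

theorem isTransversal_range_rangeSplitting (g : α → α) :
    IsTransversal g (Set.range (Set.rangeSplitting g)) := by
  refine ⟨?_, ?_⟩
  · rintro _ ⟨x, rfl⟩ _ ⟨y, rfl⟩ hxy
    rw [Set.apply_rangeSplitting g x, Set.apply_rangeSplitting g y] at hxy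
    rw [Subtype.ext hxy]
  · rw [← Set.range_comp, Function.comp_def]
    simp only [Set.apply_rangeSplitting, Subtype.range_coe]

theorem exists_isTransversal_mk_compl_eq_collapse (g : α → α) :
    ∃ T, IsTransversal g T ∧ #(Tᶜ : Set α) = collapse g := by
  have : Nonempty {T : Set α // IsTransversal g T} := ⟨⟨_, isTransversal_range_rangeSplitting g⟩⟩
  obtain ⟨⟨T, hT⟩, hT_card⟩ := ciInf_mem fun T : {T : Set α // IsTransversal g T} => #(T.1ᶜ : Set α)
  exact ⟨T, hT, hT_card⟩

theorem collapse_le_mk_compl {T : Set α} (hT : IsTransversal g T) :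
    collapse g ≤ #(Tᶜ : Set α) :=
  ciInf_le' _ (⟨T, hT⟩ : {T : Set α // IsTransversal g T})

theorem collapse_eq_zero_of_injective (hg : Function.Injective g) : collapse g = 0 := by
  simpa using collapse_le_mk_compl (⟨hg.injOn, Set.image_univ⟩ : IsTransversal g Set.univ)

theorem isTransversal_congr_ker (hker : Setoid.ker g = Setoid.ker h) :
    IsTransversal g = IsTransversal h := by
  have hgh : ∀ x y, g x = g y ↔ h x = h y := fun x y => by
    rw [← Setoid.ker_def, ← Setoid.ker_def, hker]
  have himage : ∀ (k : α → α) (T : Set α), k '' T = Set.range k ↔ ∀ x, ∃ t ∈ T, k t = k x :=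
    fun k T => ⟨fun hk x => (hk.symm ▸ Set.mem_range_self x : k x ∈ k '' T), fun hk => (Set.image_subset_range k T).antisymm
      (Set.range_subset_iff.mpr hk)⟩
  ext T
  simp only [IsTransversal, Set.InjOn, himage, hgh]

theorem collapse_congr_ker (hker : Setoid.ker g = Setoid.ker h) : collapse g = collapse h := by
  unfold collapse
  rw [isTransversal_congr_ker hker]

theorem finite_preimage_singleton_of_collapse_lt_aleph0 (hc : collapse g < ℵ₀) (y : α) :
    (g ⁻¹' {y}).Finite := by
  obtain ⟨T, hT, hT_card⟩ := exists_isTransversal_mk_compl_eq_collapse g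
  have hfiber_T : (g ⁻¹' {y} ∩ T).Subsingleton := fun x hx x' hx' =>
    hT.1 hx.2 hx'.2 (hx.1.trans hx'.1.symm)
  refine (hfiber_T.finite.union (lt_aleph0_iff_set_finite.mp (hT_card ▸ hc))).subset ?_
  intro x hx
  by_cases hxT : x ∈ T
  exacts [Or.inl ⟨hx, hxT⟩, Or.inr hxT]

theorem contract_eq_zero_of_collapse_lt_aleph0 (hc : collapse g < ℵ₀) : contract g = 0 := by
  rw [contract, mk_set_eq_zero_iff, Set.eq_empty_iff_forall_notMem]
  exact fun y hy => hy (finite_preimage_singleton_of_collapse_lt_aleph0 hc y)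

theorem infinite_of_mk_compl_lt_aleph0 [Infinite α] {s : Set α} (hs : #(sᶜ : Set α) < ℵ₀) :
    s.Infinite := by
  simpa using (lt_aleph0_iff_set_finite.mp hs).infinite_compl

theorem infinite_range_of_collapse_lt_aleph0 [Infinite α] (hc : collapse g < ℵ₀) :
    (Set.range g).Infinite := by
  obtain ⟨T, hT, hT_card⟩ := exists_isTransversal_mk_compl_eq_collapse g
  rw [← hT.2]
  exact (infinite_of_mk_compl_lt_aleph0 (hT_card ▸ hc)).image hT.1

theorem defect_eq_zero_of_surjective (hg : Function.Surjective g) : defect g = 0 := by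
  rw [defect, hg.range_eq, Set.compl_univ, mk_eq_zero]

theorem mem_S12345_of_lt_aleph0 {g : Function.End α} (hc : collapse g < ℵ₀) (hd : defect g < ℵ₀)
    (hcd : collapse g = 0 ↔ defect g = 0) : g ∈ S12345 := by
  refine ⟨⟨⟨⟨?_, ?_⟩, Or.inl hc⟩, Or.inr hd⟩, ?_⟩
  · by_cases h0 : collapse g = 0
    exacts [Or.inl h0, Or.inr (pos_iff_ne_zero.mpr (mt hcd.mpr h0))]
  · by_cases h0 : defect g = 0
    exacts [Or.inr h0, Or.inl (pos_iff_ne_zero.mpr (mt hcd.mp h0))]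
  · exact (contract_eq_zero_of_collapse_lt_aleph0 hc).trans_lt aleph0_pos

theorem mem_S12345_of_bijective {g : Function.End α} (hg : Function.Bijective g) : g ∈ S12345 := by
  have hc := collapse_eq_zero_of_injective hg.1
  have hd := defect_eq_zero_of_surjective hg.2
  exact mem_S12345_of_lt_aleph0 (hc ▸ aleph0_pos) (hd ▸ aleph0_pos) (by simp [hc, hd])

end Transversal

section Kernel

variable {α β γ : Type*}

theorem Setoid.ker_comp_of_injOn {u : β → γ} {b : α → β} (hu : Set.InjOn u (Set.range b)) :
    Setoid.ker (u ∘ b) = Setoid.ker b :=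
  Setoid.ext fun x y => by
    simp only [Setoid.ker_def, Function.comp_apply]
    exact hu.eq_iff (Set.mem_range_self x) (Set.mem_range_self y)

theorem exists_ker_eq_range_eq (f : α → β) {T : Set γ} (e : Set.range f ≃ T) :
    ∃ b : α → γ, Setoid.ker b = Setoid.ker f ∧ Set.range b = T := by
  refine ⟨fun x => e (Set.rangeFactorization f x), Setoid.ext fun x y => ?_, ?_⟩
  · simp only [Setoid.ker_def, Subtype.val_inj, e.injective.eq_iff, Set.rangeFactorization,
      Subtype.mk.injEq]
  · change Set.range (Subtype.val ∘ e ∘ Set.rangeFactorization f) = T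
    rw [Set.range_comp,
      (e.surjective.comp Set.rangeFactorization_surjective).range_eq, Set.image_univ,
      Subtype.range_coe]

theorem exists_equiv_comp_eq_of_ker_eq {g h : α → β} (hker : Setoid.ker g = Setoid.ker h)
    (hcompl : #((Set.range g)ᶜ : Set β) = #((Set.range h)ᶜ : Set β)) :
    ∃ σ : β ≃ β, σ ∘ g = h := by
  classical
  obtain ⟨e⟩ := Cardinal.eq.mp hcompl
  let r : Set.range g ≃ Set.range h := (Setoid.quotientKerEquivRange g).symm.trans
    ((Quotient.congrRight fun x y => by rw [hker]).trans (Setoid.quotientKerEquivRange h))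
  refine ⟨(Equiv.Set.sumCompl _).symm.trans ((r.sumCongr e).trans (Equiv.Set.sumCompl _)), ?_⟩
  funext x
  have hr : r ⟨g x, Set.mem_range_self x⟩ = ⟨h x, Set.mem_range_self x⟩ := by
    have hq : (Setoid.quotientKerEquivRange g).symm ⟨g x, Set.mem_range_self x⟩ = ⟦x⟧ :=
      (Equiv.symm_apply_eq _).mpr (Subtype.ext rfl)
    simp only [r, Equiv.trans_apply, hq]
    rfl
  simp [Equiv.Set.sumCompl_symm_apply_of_mem (Set.mem_range_self x), hr]

end Kernel

theorem stmt3 (Ω : Type) [Countable Ω] [Infinite Ω] (u f : Function.End Ω)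
    (hcu : 0 < collapse u) (hcu' : collapse u < ℵ₀)
    (hcf : 0 < collapse f) (hcf' : collapse f < ℵ₀)
    (hd : defect u = defect f) :
    f ∈ Subsemigroup.closure (S12345 ∪ {u}) := by
  obtain ⟨T, hT, hT_card⟩ := exists_isTransversal_mk_compl_eq_collapse u
  have : Infinite T := (infinite_of_mk_compl_lt_aleph0 (hT_card ▸ hcu')).to_subtype
  have : Infinite (Set.range f) := (infinite_range_of_collapse_lt_aleph0 hcf').to_subtype
  obtain ⟨b, hb_ker, hb_range⟩ : ∃ b : Function.End Ω, _ :=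
    exists_ker_eq_range_eq f (nonempty_equiv_of_countable.some : Set.range f ≃ T)
  have hb_collapse : collapse b = collapse f := collapse_congr_ker hb_ker
  have hb_defect : defect b = collapse u := by
    rw [← hT_card, ← hb_range]
    rfl
  have hb : b ∈ S12345 := mem_S12345_of_lt_aleph0 (hb_collapse ▸ hcf') (hb_defect ▸ hcu')
    (by simp only [hb_collapse, hb_defect, hcf.ne', hcu.ne'])
  have hub_ker : Setoid.ker ((u : Ω → Ω) ∘ b) = Setoid.ker f :=
    (Setoid.ker_comp_of_injOn (hb_range ▸ hT.1)).trans hb_ker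
  have hub_range : Set.range ((u : Ω → Ω) ∘ b) = Set.range u := by
    rw [← hT.2, ← hb_range]
    exact Set.range_comp _ _
  obtain ⟨σ, hσ⟩ := exists_equiv_comp_eq_of_ker_eq hub_ker (by rw [hub_range]; exact hd)
  have hσ_mem : (show Function.End Ω from ⇑σ) ∈ S12345 := mem_S12345_of_bijective σ.bijective
  have hf : f = (show Function.End Ω from ⇑σ) * u * b := hσ.symm
  rw [hf]
  exact Subsemigroup.mul_mem _
    (Subsemigroup.mul_mem _ (Subsemigroup.subset_closure (Or.inl hσ_mem))
      (Subsemigroup.subset_closure (Or.inr rfl)))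
    (Subsemigroup.subset_closure (Or.inl hb))
end

section
/- Let Ω be a countably infinite set and let u, f ∈ Ω^Ω. If 0 < d(u) < ∞, 0 < d(f) < ∞, c(u) = c(f), and k(f) < ∞, then f belongs to the subsemigroup of Ω^Ω generated by S_{1,2,3,4,5} ∪ {u}. -/
/-!
Setting: `Ω` is a countably infinite set, `Function.End Ω = Ω → Ω` is the full
transformation semigroup (a subset is closed under composition in one order iff
it is closed in the other, so the lattice of subsemigroups is unaffected by the
left-to-right convention of the paper).
-/

open Cardinal

/-!
Write `f = a ∘ u ∘ b`. Let `a` map `Ωu` bijectively onto `Ωf` and the rest of `Ω` into `Ωf`: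
then `Ωu` is a transversal of `a`, so `c(a) = d(u)` and `d(a) = d(f)`, and every fibre of `a`
is finite because `Ω \ Ωu` is. Let `b` have the kernel of `f` and map onto a transversal `T`
of `u`, matched so that `a ∘ u ∘ b = f`: then `c(b) = c(f)`, `k(b) = k(f)` and
`d(b) = |Ω \ T| = c(u) = c(f)`. Both `a` and `b` lie in `S_{1,2,3,4,5}`.
-/

open Set Function

section Transversal

variable {Ω : Type*} {g f : Ω → Ω} {T : Set Ω}

theorem isTransversal_iff_bijOn : IsTransversal g T ↔ BijOn g T (range g) :=
  ⟨fun h => ⟨mapsTo_range g T, h.1, h.2.symm.subset⟩, fun h => ⟨h.injOn, h.image_eq⟩⟩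

theorem isTransversal_iff : IsTransversal g T ↔ InjOn g T ∧ ∀ x, ∃ t ∈ T, g t = g x := by
  rw [IsTransversal, Subset.antisymm_iff, and_iff_right (image_subset_range g T),
    range_subset_iff]
  rfl

theorem exists_isTransversal (g : Ω → Ω) : ∃ T, IsTransversal g T := by
  obtain ⟨T, -, hT⟩ := exists_subset_bijOn univ g
  exact ⟨T, isTransversal_iff_bijOn.2 (image_univ ▸ hT)⟩

theorem mk_compl_le_of_isTransversal {T' : Set Ω} (hT : IsTransversal g T)
    (hT' : IsTransversal g T') : #(Tᶜ : Set Ω) ≤ #(T'ᶜ : Set Ω) := by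
  classical
  choose r hrT hrg using (isTransversal_iff.1 hT).2
  have twin_ne {x} (hx : x ∉ T) : r x ≠ x := fun h => hx (h ▸ hrT x)
  -- `x ∉ T` goes to its `g`-twin in `T` if `x ∈ T'`, and stays put otherwise
  have maps (x : ↥Tᶜ) : (if (x : Ω) ∈ T' then r x else x) ∈ T'ᶜ := by
    split_ifs with hx'
    · exact fun hr => twin_ne x.2 (hT'.1 hr hx' (hrg x))
    · exact hx'
  refine mk_le_of_injective (f := fun x => ⟨_, maps x⟩) fun x y hxy => Subtype.ext ?_
  have hxy : (if (x : Ω) ∈ T' then r x else x) = if (y : Ω) ∈ T' then r y else y :=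
    congrArg Subtype.val hxy
  split_ifs at hxy with hx hy hy
  · exact hT'.1 hx hy (by rw [← hrg x, ← hrg y, hxy])
  · exact absurd (hxy ▸ hrT x) y.2
  · exact absurd (hxy ▸ hrT y) x.2
  · exact hxy

theorem collapse_eq_of_isTransversal (hT : IsTransversal g T) :
    collapse g = #(Tᶜ : Set Ω) := by
  have : Nonempty {T : Set Ω // IsTransversal g T} := ⟨⟨T, hT⟩⟩
  exact le_antisymm (ciInf_le' _ (⟨T, hT⟩ : {T : Set Ω // IsTransversal g T}))
    (le_ciInf fun T' => mk_compl_le_of_isTransversal hT T'.2)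

section SameKernel

variable (h : ∀ x y, g x = g y ↔ f x = f y)
include h

theorem isTransversal_iff_of_ker : IsTransversal g T ↔ IsTransversal f T := by
  simp only [isTransversal_iff, InjOn, h]

theorem collapse_eq_of_ker : collapse g = collapse f := by
  obtain ⟨T, hT⟩ := exists_isTransversal f
  rw [collapse_eq_of_isTransversal hT,
    collapse_eq_of_isTransversal ((isTransversal_iff_of_ker h).2 hT)]

theorem contract_le_of_ker : contract g ≤ contract f := by
  choose w hw using fun α : {α | (g ⁻¹' {α}).Infinite} => (α.2.nonempty : ∃ x, g x = α)
  have fiber_eq (α) : f ⁻¹' {f (w α)} = g ⁻¹' {(α : Ω)} := by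
    ext x
    exact (h x (w α)).symm.trans (by rw [hw α]; rfl)
  refine mk_le_of_injective (f := fun α => ⟨f (w α), ?_⟩) fun α β hαβ => Subtype.ext ?_
  · show (f ⁻¹' {f (w α)}).Infinite
    rw [fiber_eq]
    exact α.2
  · exact (hw α).symm.trans (((h _ _).2 (congrArg Subtype.val hαβ)).trans (hw β))

end SameKernel

theorem contract_eq_zero_of_injOn {A : Set Ω} (hinj : InjOn g A) (hA : Aᶜ.Finite) :
    contract g = 0 := by
  have fiber_finite (α : Ω) : (g ⁻¹' {α}).Finite := by
    have on_A : (g ⁻¹' {α} ∩ A).Subsingleton := fun x hx y hy =>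
      hinj hx.2 hy.2 (hx.1.trans hy.1.symm)
    exact inter_union_compl (g ⁻¹' {α}) A ▸ on_A.finite.union (hA.subset inter_subset_right)
  rw [contract, mk_eq_zero_iff, isEmpty_subtype]
  exact fun α hα => hα (fiber_finite α)

theorem infinite_range_of_defect_lt_aleph0 [Infinite Ω] (h : defect g < ℵ₀) :
    (range g).Infinite := fun hfin =>
  infinite_univ (union_compl_self (range g) ▸ hfin.union (lt_aleph0_iff_set_finite.1 h))

theorem mk_range_eq_aleph0 [Countable Ω] [Infinite Ω] (h : defect g < ℵ₀) :
    #(range g) = ℵ₀ :=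
  have := (infinite_range_of_defect_lt_aleph0 h).to_subtype
  mk_eq_aleph0 _

end Transversal

theorem exists_bijOn_of_mk_eq {α β : Type u} {s : Set α} {t : Set β} (ht : t.Nonempty)
    (h : #s = #t) : ∃ a : α → β, BijOn a s t ∧ range a ⊆ t := by
  classical
  obtain ⟨e⟩ := Cardinal.eq.1 h
  obtain ⟨c, hc⟩ := ht
  refine ⟨fun x => if hx : x ∈ s then e ⟨x, hx⟩ else c, ⟨fun x hx => ?_,
    fun x hx y hy hxy => ?_, fun y hy => ⟨e.symm ⟨y, hy⟩, (e.symm _).2, ?_⟩⟩, ?_⟩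
  · simp only [dif_pos hx]
    exact (e _).2
  · simp only [dif_pos hx, dif_pos hy] at hxy
    exact congrArg Subtype.val (e.injective (Subtype.ext hxy))
  · simp
  · rintro _ ⟨x, rfl⟩
    dsimp only
    split_ifs
    exacts [(e _).2, hc]

theorem Set.BijOn.exists_comp_eq {α β γ : Type*} [Nonempty α] {g : α → β} {T : Set α}
    {f : γ → β} (h : BijOn g T (range f)) : ∃ b : γ → α, g ∘ b = f ∧ range b = T := by
  refine ⟨invFunOn g T ∘ f, funext fun x => invFunOn_eq (h.surjOn (mem_range_self x)),
    (range_subset_iff.2 fun x => invFunOn_mem (h.surjOn (mem_range_self x))).antisymm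
      fun t ht => ?_⟩
  obtain ⟨x, hx⟩ := h.mapsTo ht
  exact ⟨x, show invFunOn g T (f x) = t by rw [hx, h.injOn.leftInvOn_invFunOn ht]⟩

section S12345

variable {Ω : Type*} {g : Function.End Ω}

theorem mem_S12345_of_collapse_eq_defect (h : collapse g = defect g) (hk : contract g < ℵ₀) :
    g ∈ S12345 := by
  refine ⟨⟨⟨⟨?_, ?_⟩, ?_⟩, ?_⟩, hk⟩ <;> simp only [S1, S2, S3, S4, mem_ofPred_eq, h]
  exacts [eq_zero_or_pos _, (eq_zero_or_pos _).symm, lt_or_ge _ _, (lt_or_ge _ _).symm]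

theorem mem_S12345_of_finite (hc₀ : 0 < collapse g) (hc : collapse g < ℵ₀)
    (hd₀ : 0 < defect g) (hd : defect g < ℵ₀) (hk : contract g < ℵ₀) : g ∈ S12345 :=
  ⟨⟨⟨⟨Or.inr hd₀, Or.inl hc₀⟩, Or.inl hc⟩, Or.inr hd⟩, hk⟩

end S12345

section Factors

variable {Ω : Type*} {u f : Function.End Ω}

theorem exists_left_factor [Countable Ω] [Infinite Ω] (hdu : 0 < defect u)
    (hdu' : defect u < ℵ₀) (hdf : 0 < defect f) (hdf' : defect f < ℵ₀) :
    ∃ a ∈ S12345, BijOn a (range u) (range f) := by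
  obtain ⟨a, ha, hra⟩ := exists_bijOn_of_mk_eq (range_nonempty f)
    ((mk_range_eq_aleph0 hdu').trans (mk_range_eq_aleph0 hdf').symm)
  have range_eq : range a = range f := hra.antisymm (ha.surjOn.trans (image_subset_range a _))
  have hca : collapse a = defect u :=
    collapse_eq_of_isTransversal (isTransversal_iff_bijOn.2 (range_eq ▸ ha))
  have hda : defect a = defect f := by unfold defect; rw [range_eq]
  have hka : contract a = 0 :=
    contract_eq_zero_of_injOn ha.injOn (lt_aleph0_iff_set_finite.1 hdu')
  exact ⟨a, mem_S12345_of_finite (hca ▸ hdu) (hca ▸ hdu') (hda ▸ hdf) (hda ▸ hdf')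
    (hka ▸ aleph0_pos), ha⟩

theorem exists_right_factor [Nonempty Ω] {a : Function.End Ω} (ha : BijOn a (range u) (range f))
    (hc : collapse u = collapse f) (hkf : contract f < ℵ₀) :
    ∃ b ∈ S12345, a * u * b = f := by
  obtain ⟨T, hT⟩ := exists_isTransversal u
  have hau : BijOn (a ∘ u) T (range f) := ha.comp (isTransversal_iff_bijOn.1 hT)
  obtain ⟨b, hab, hrb⟩ := hau.exists_comp_eq
  have hb (x) : b x ∈ T := hrb ▸ mem_range_self x
  have ker_eq (x y) : b x = b y ↔ f x = f y := by
    rw [← hab, comp_apply, comp_apply, hau.injOn.eq_iff (hb x) (hb y)]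
  have hdb : defect b = collapse b := by
    rw [collapse_eq_of_ker ker_eq, ← hc, collapse_eq_of_isTransversal hT, defect, hrb]
  exact ⟨b, mem_S12345_of_collapse_eq_defect hdb.symm
    ((contract_le_of_ker ker_eq).trans_lt hkf), hab⟩

end Factors

theorem stmt7 (Ω : Type) [Countable Ω] [Infinite Ω] (u f : Function.End Ω)
    (hdu : 0 < defect u) (hdu' : defect u < ℵ₀)
    (hdf : 0 < defect f) (hdf' : defect f < ℵ₀)
    (hc : collapse u = collapse f) (hkf : contract f < ℵ₀) :
    f ∈ Subsemigroup.closure (S12345 ∪ {u}) := by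
  obtain ⟨a, haS, ha⟩ := exists_left_factor hdu hdu' hdf hdf'
  obtain ⟨b, hbS, rfl⟩ := exists_right_factor ha hc hkf
  exact mul_mem (mul_mem (Subsemigroup.subset_closure (.inl haS))
    (Subsemigroup.subset_closure (.inr rfl))) (Subsemigroup.subset_closure (.inl hbS))
end

section
/- Let Ω be a countably infinite set and let u, f ∈ Ω^Ω. If u is surjective, d(f) < ∞, k(f) < ∞, and c(u) = c(f) = ∞, then f belongs to the subsemigroup of Ω^Ω generated by S_{1,2,3,4,5} ∪ {u}. -/
/-!
Setting: `Ω` is a countably infinite set, `Function.End Ω = Ω → Ω` is the full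
transformation semigroup (a subset is closed under composition in one order iff
it is closed in the other, so the lattice of subsemigroups is unaffected by the
left-to-right convention of the paper).
-/

open Cardinal

/-!
Choose a section `s` of the surjection `u`, so that `f = u ∘ (s ∘ f)`. Composing with the
injection `s` does not decrease the collapse of `f` nor increase its infinite contraction
index, while `s ∘ f` lands in the range of `s`, whose complement has size `c(u) = ∞`. Hence
`s ∘ f` has infinite defect and infinite collapse, and lies in `S_{1,2,3,4,5}`.
-/

section

variable {Ω : Type*}

lemma exists_isTransversal_s9 (f : Ω → Ω) : Nonempty {T : Set Ω // IsTransversal f T} := by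
  refine ⟨⟨Set.range (Set.rangeSplitting f), ?_, ?_⟩⟩
  · exact Function.Injective.injOn_range (by
      rw [Set.comp_rangeSplitting]; exact Subtype.val_injective)
  · rw [← Set.range_comp, Set.comp_rangeSplitting, Subtype.range_coe]

lemma collapse_le_of_isTransversal {f : Ω → Ω} {T : Set Ω} (hT : IsTransversal f T) :
    collapse f ≤ #(Tᶜ : Set Ω) :=
  ciInf_le' (fun T : {T : Set Ω // IsTransversal f T} => #(T.1ᶜ : Set Ω)) ⟨T, hT⟩

lemma IsTransversal.of_comp_injective {s f : Ω → Ω} (hs : s.Injective) {T : Set Ω}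
    (hT : IsTransversal (s ∘ f) T) : IsTransversal f T := by
  refine ⟨fun x hx y hy hxy => hT.1 hx hy (congrArg s hxy), ?_⟩
  have h := hT.2
  rw [Set.image_comp, Set.range_comp] at h
  exact Set.image_injective.mpr hs h

lemma collapse_le_collapse_comp {s f : Ω → Ω} (hs : s.Injective) :
    collapse f ≤ collapse (s ∘ f) := by
  have := exists_isTransversal_s9 (s ∘ f)
  exact le_ciInf fun T => collapse_le_of_isTransversal (T.2.of_comp_injective hs)

lemma isTransversal_range_of_leftInverse {u s : Ω → Ω} (h : Function.LeftInverse u s) :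
    IsTransversal u (Set.range s) := by
  refine ⟨Function.Injective.injOn_range (by rw [h.comp_eq_id]; exact Function.injective_id), ?_⟩
  rw [← Set.range_comp, h.comp_eq_id, Set.range_id, Set.range_eq_univ.mpr h.surjective]

lemma collapse_le_defect_comp {u s : Ω → Ω} (h : Function.LeftInverse u s) (f : Ω → Ω) :
    collapse u ≤ defect (s ∘ f) :=
  (collapse_le_of_isTransversal (isTransversal_range_of_leftInverse h)).trans <|
    mk_le_mk_of_subset (Set.compl_subset_compl.mpr (Set.range_comp_subset_range f s))

lemma contract_comp_le {s : Ω → Ω} (hs : s.Injective) (f : Ω → Ω) :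
    contract (s ∘ f) ≤ contract f := by
  have hsub : {α | ((s ∘ f) ⁻¹' {α}).Infinite} ⊆ s '' {β | (f ⁻¹' {β}).Infinite} := by
    intro α hα
    obtain ⟨x, hx⟩ := hα.nonempty
    refine ⟨f x, hα.mono fun y hy => hs (hy.trans hx.symm), hx⟩
  exact (mk_le_mk_of_subset hsub).trans mk_image_le

lemma mem_S12345_of_aleph0_le {g : Function.End Ω} (hd : ℵ₀ ≤ defect g) (hc : ℵ₀ ≤ collapse g)
    (hk : contract g < ℵ₀) : g ∈ S12345 :=
  ⟨⟨⟨⟨.inr (aleph0_pos.trans_le hd), .inl (aleph0_pos.trans_le hc)⟩, .inr hd⟩, .inl hc⟩, hk⟩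

end

theorem stmt9_general (Ω : Type) (u f : Function.End Ω)
    (hu : Function.Surjective u) (hkf : contract f < ℵ₀)
    (hcu : ℵ₀ ≤ collapse u) (hcf : ℵ₀ ≤ collapse f) :
    f ∈ Subsemigroup.closure (S12345 ∪ {u}) := by
  obtain ⟨s, hs⟩ : ∃ s, Function.LeftInverse u s := ⟨_, Function.rightInverse_surjInv hu⟩
  let g : Function.End Ω := s ∘ f
  have hg : g ∈ S12345 :=
    mem_S12345_of_aleph0_le (hcu.trans (collapse_le_defect_comp hs f))
      (hcf.trans (collapse_le_collapse_comp hs.injective))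
      ((contract_comp_le hs.injective f).trans_lt hkf)
  have hf : f = u * g := funext fun x => (hs (f x)).symm
  rw [hf]
  exact mul_mem (Subsemigroup.subset_closure (.inr rfl)) (Subsemigroup.subset_closure (.inl hg))

theorem stmt9 (Ω : Type) [Countable Ω] [Infinite Ω] (u f : Function.End Ω)
    (hu : Function.Surjective u) (hdf : defect f < ℵ₀) (hkf : contract f < ℵ₀)
    (hcu : ℵ₀ ≤ collapse u) (hcf : ℵ₀ ≤ collapse f) :
    f ∈ Subsemigroup.closure (S12345 ∪ {u}) :=
  stmt9_general Ω u f hu hkf hcu hcf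
end
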